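/- arXiv:1209.0108 — 2 statements merged into one kernel-verified Lean document; each statement's English description precedes it below -/
import Mathlib

section
/- Let N ≥ 1. For every θ ∈ [0, π], the auxiliary distance satisfies ρ_N(θ) = Σ_{n=1}^{N} C(N, n) (sin(θ/2))^{2n} (cos(θ/2))^{2(N−n)} · Σ_{k=1}^{n} 1/√(k(N−k+1)). -/
noncomputable section
open Matrix

/-- The diagonal matrix `H` with `H|m⟩ = m|m⟩`, `m = i - N/2` for index `i : Fin (N+1)`. -/
def Hmat (N : ℕ) : Matrix (Fin (N + 1)) (Fin (N + 1)) ℂ :=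
  Matrix.diagonal fun i => (i : ℂ) - (N : ℂ) / 2

/-- The raising operator `E` with `E|m⟩ = √((j-m)(j+m+1)) |m+1⟩`, `j = N/2`. -/
def Emat (N : ℕ) : Matrix (Fin (N + 1)) (Fin (N + 1)) ℂ := fun p q =>
  if (p : ℕ) = (q : ℕ) + 1 then (Real.sqrt ((N - (q : ℕ)) * ((q : ℕ) + 1)) : ℂ) else 0

def Fmat (N : ℕ) : Matrix (Fin (N + 1)) (Fin (N + 1)) ℂ := (Emat N)ᴴ

/-- The Dirac operator `D_N = [[1+H, F], [E, 1-H]]` in block form on `ℂ^(N+1) ⊗ ℂ²`. -/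
def DiracOp (N : ℕ) :
    Matrix (Fin (N + 1) ⊕ Fin (N + 1)) (Fin (N + 1) ⊕ Fin (N + 1)) ℂ :=
  Matrix.fromBlocks (1 + Hmat N) (Fmat N) (Emat N) (1 - Hmat N)

/-- `a ⊗ 1₂` in block form. -/
def tensorOne (N : ℕ) (a : Matrix (Fin (N + 1)) (Fin (N + 1)) ℂ) :
    Matrix (Fin (N + 1) ⊕ Fin (N + 1)) (Fin (N + 1) ⊕ Fin (N + 1)) ℂ :=
  Matrix.fromBlocks a 0 0 a

/-- The operator norm of a square complex matrix, acting on Euclidean space. -/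
def opNorm {n : Type*} [Fintype n] [DecidableEq n] (M : Matrix n n ℂ) : ℝ :=
  ‖Matrix.toEuclideanCLM (𝕜 := ℂ) M‖

/-- The Bloch coherent state vector `|φ,θ⟩_N`, with component at index `i` (i.e. `m = i − N/2`)
equal to `C(N, i)^(1/2) e^(−i m φ) (sin(θ/2))^(N/2+m) (cos(θ/2))^(N/2−m)`. -/
def blochVec (N : ℕ) (φ θ : ℝ) : Fin (N + 1) → ℂ := fun i =>
  (Real.sqrt (N.choose i) : ℂ) * Complex.exp (-Complex.I * ((i : ℂ) - (N : ℂ) / 2) * (φ : ℂ)) *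
    (Real.sin (θ / 2) : ℂ) ^ (i : ℕ) * (Real.cos (θ / 2) : ℂ) ^ (N - (i : ℕ))

/-- The Bloch coherent state `ψ^N_(φ,θ)(a) = ⟨φ,θ| a |φ,θ⟩_N`. -/
def psiState (N : ℕ) (a : Matrix (Fin (N + 1)) (Fin (N + 1)) ℂ) (φ θ : ℝ) : ℂ :=
  star (blochVec N φ θ) ⬝ᵥ a.mulVec (blochVec N φ θ)

/-- The auxiliary distance `ρ_N(θ)`: the supremum of `|ψ^N_(0,θ)(a) − ψ^N_(0,0)(a)|` over
hermitian *diagonal* matrices `a` with `‖[D_N, a ⊗ 1₂]‖ ≤ 1`. -/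
def rhoAux (N : ℕ) (θ : ℝ) : ℝ :=
  sSup {r : ℝ | ∃ a : Matrix (Fin (N + 1)) (Fin (N + 1)) ℂ, a.IsHermitian ∧ a.IsDiag ∧
    opNorm (DiracOp N * tensorOne N a - tensorOne N a * DiracOp N) ≤ 1 ∧
    r = ‖psiState N a 0 θ - psiState N a 0 0‖}

/-!
For a hermitian diagonal `a = diag(d_0, …, d_N)` the commutator `[D_N, a ⊗ 1₂]` only couples
`|k - 1⟩` with `|k⟩`, with coefficients `±√(k (N + 1 - k)) (d_k - d_{k-1})`; it is a permutation
matrix times a diagonal one, so the Lipschitz condition says exactly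
`|d_k - d_{k-1}| ≤ 1 / √(k (N + 1 - k))`. On diagonal matrices the coherent state `ψ_(0,θ)` is
the binomial average `∑ₙ C(N,n) sin²ⁿ(θ/2) cos²⁽ᴺ⁻ⁿ⁾(θ/2) dₙ`, and `ψ_(0,0)(a) = d_0`.
Telescoping bounds `|dₙ - d_0|` by the partial sums `∑_{k ≤ n} 1 / √(k (N + 1 - k))`, and these
partial sums are themselves an admissible `d`, which attains the bound.
-/

section OpNorm

variable {n : Type*} [Fintype n] [DecidableEq n]

lemma norm_apply_le_opNorm (M : Matrix n n ℂ) (i j : n) : ‖M i j‖ ≤ opNorm M := by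
  let T := toEuclideanCLM (𝕜 := ℂ) M
  calc ‖M i j‖ = ‖T (EuclideanSpace.single j 1) i‖ := by simp [T, EuclideanSpace.single]
    _ ≤ ‖T (EuclideanSpace.single j 1)‖ := PiLp.norm_apply_le _ i
    _ ≤ ‖T‖ * ‖EuclideanSpace.single j (1 : ℂ)‖ := T.le_opNorm _
    _ = opNorm M := by simp [T, opNorm]

lemma opNorm_le_one_of_perm (M : Matrix n n ℂ) (σ : Equiv.Perm n)
    (hsupp : ∀ i j, M i j ≠ 0 → j = σ i) (hle : ∀ i j, ‖M i j‖ ≤ 1) : opNorm M ≤ 1 := by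
  refine ContinuousLinearMap.opNorm_le_bound _ zero_le_one fun x => ?_
  have hrow : ∀ i, (M *ᵥ x) i = M i (σ i) * x (σ i) := fun i =>
    Finset.sum_eq_single (σ i) (fun j _ hj => by
      simp [not_imp_comm.mp (hsupp i j) hj]) (by simp)
  rw [one_mul, EuclideanSpace.norm_eq, EuclideanSpace.norm_eq]
  refine Real.sqrt_le_sqrt ?_
  calc ∑ i, ‖(M *ᵥ x) i‖ ^ 2 ≤ ∑ i, ‖x (σ i)‖ ^ 2 := by
        refine Finset.sum_le_sum fun i _ => ?_
        rw [hrow, norm_mul]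
        gcongr
        exact mul_le_of_le_one_left (norm_nonneg _) (hle _ _)
    _ = ∑ i, ‖x i‖ ^ 2 := Equiv.sum_comp σ fun i => ‖x i‖ ^ 2

end OpNorm

/-- `E |k - 1⟩ = raisingCoeff N k • |k⟩`, indexing the basis by `k = m + N/2`. -/
def raisingCoeff (N k : ℕ) : ℝ := √((k : ℝ) * (N + 1 - k))

lemma raisingCoeff_pos {N k : ℕ} (hk₀ : 0 < k) (hkN : k ≤ N) : 0 < raisingCoeff N k := by
  have : (k : ℝ) ≤ N := by exact_mod_cast hkN
  have : (0 : ℝ) < k := by exact_mod_cast hk₀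
  exact Real.sqrt_pos.mpr (by nlinarith)

lemma raisingCoeff_nonneg (N k : ℕ) : 0 ≤ raisingCoeff N k := Real.sqrt_nonneg _

lemma Emat_apply (N : ℕ) (p q : Fin (N + 1)) :
    Emat N p q = if (p : ℕ) = q + 1 then (raisingCoeff N p : ℂ) else 0 := by
  unfold Emat raisingCoeff
  split_ifs with h
  · rw [h]; push_cast; ring_nf
  · rfl

lemma Fmat_apply (N : ℕ) (p q : Fin (N + 1)) : Fmat N p q = Emat N q p := by
  rw [Fmat, conjTranspose_apply, Emat_apply]
  split_ifs <;> simp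

def diracCommutator (N : ℕ) (a : Matrix (Fin (N + 1)) (Fin (N + 1)) ℂ) :
    Matrix (Fin (N + 1) ⊕ Fin (N + 1)) (Fin (N + 1) ⊕ Fin (N + 1)) ℂ :=
  DiracOp N * tensorOne N a - tensorOne N a * DiracOp N

lemma diracCommutator_diagonal (N : ℕ) (d : Fin (N + 1) → ℂ) :
    diracCommutator N (diagonal d) =
      fromBlocks 0 (-(of fun p q => Emat N p q * (d q - d p))ᵀ)
        (of fun p q => Emat N p q * (d q - d p)) 0 := by
  rw [diracCommutator, DiracOp, tensorOne, fromBlocks_multiply, fromBlocks_multiply]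
  ext (p | p) (q | q) <;>
    simp [Hmat, Fmat_apply, diagonal_apply, sub_mul, mul_sub, add_mul, mul_add] <;>
    (try split_ifs) <;> ring

lemma eq_add_one_of_Emat_apply_ne_zero {N : ℕ} {p q : Fin (N + 1)} (h : Emat N p q ≠ 0) :
    p = q + 1 := by
  rw [Emat_apply] at h
  split_ifs at h with hpq
  · ext; rw [Fin.val_add_one_of_lt' (by omega), hpq]
  · exact absurd rfl h

lemma norm_Emat_mul_sub {N : ℕ} (d : ℕ → ℝ) {p q : Fin (N + 1)} (hpq : (p : ℕ) = q + 1) :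
    ‖Emat N p q * ((d q : ℂ) - d p)‖ = raisingCoeff N (q + 1) * |d (q + 1) - d q| := by
  rw [Emat_apply, if_pos hpq, hpq, ← Complex.ofReal_sub, ← Complex.ofReal_mul, Complex.norm_real,
    Real.norm_eq_abs, abs_mul, abs_of_nonneg (raisingCoeff_nonneg _ _), abs_sub_comm]

lemma opNorm_diracCommutator_le_one_iff (N : ℕ) (d : ℕ → ℝ) :
    opNorm (diracCommutator N (diagonal fun i : Fin (N + 1) => (d i : ℂ))) ≤ 1 ↔
      ∀ k < N, raisingCoeff N (k + 1) * |d (k + 1) - d k| ≤ 1 := by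
  rw [diracCommutator_diagonal]
  constructor
  · intro h k hk
    have := (norm_apply_le_opNorm _ (Sum.inr ⟨k + 1, by omega⟩) (Sum.inl ⟨k, by omega⟩)).trans h
    rwa [fromBlocks_apply₂₁, of_apply, norm_Emat_mul_sub d rfl] at this
  · intro h
    have hle : ∀ p q : Fin (N + 1), ‖Emat N p q‖ * ‖(d q : ℂ) - d p‖ ≤ 1 := by
      intro p q
      by_cases hpq : (p : ℕ) = q + 1
      · rw [← norm_mul, norm_Emat_mul_sub d hpq]
        exact h q (by omega)
      · simp [Emat_apply, hpq]
    let σ : Equiv.Perm (Fin (N + 1) ⊕ Fin (N + 1)) :=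
      (Equiv.sumComm _ _).trans (Equiv.sumCongr (Equiv.subRight 1) (Equiv.addRight 1))
    refine opNorm_le_one_of_perm _ σ ?_ ?_
    · rintro (p | p) (q | q) hpq
      · exact absurd rfl hpq
      · simp [σ, eq_add_one_of_Emat_apply_ne_zero (left_ne_zero_of_mul (neg_ne_zero.mp hpq))]
      · simp [σ, eq_add_one_of_Emat_apply_ne_zero (left_ne_zero_of_mul hpq)]
      · exact absurd rfl hpq
    · rintro (p | p) (q | q) <;> simp [hle]

/-- `|⟨k|0,θ⟩_N|²`, the binomial distribution with parameter `sin² (θ/2)`. -/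
def binomialWeight (N : ℕ) (θ : ℝ) (n : ℕ) : ℝ :=
  (N.choose n : ℝ) * Real.sin (θ / 2) ^ (2 * n) * Real.cos (θ / 2) ^ (2 * (N - n))

lemma binomialWeight_nonneg (N : ℕ) (θ : ℝ) (n : ℕ) : 0 ≤ binomialWeight N θ n := by
  rw [binomialWeight, pow_mul, pow_mul]
  positivity

lemma sum_binomialWeight (N : ℕ) (θ : ℝ) :
    ∑ n ∈ Finset.range (N + 1), binomialWeight N θ n = 1 := by
  calc ∑ n ∈ Finset.range (N + 1), binomialWeight N θ n
      = (Real.sin (θ / 2) ^ 2 + Real.cos (θ / 2) ^ 2) ^ N := by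
        rw [add_pow]
        refine Finset.sum_congr rfl fun n _ => ?_
        rw [binomialWeight, pow_mul, pow_mul]
        ring
    _ = 1 := by rw [Real.sin_sq_add_cos_sq, one_pow]

lemma psiState_diagonal (N : ℕ) (d : ℕ → ℝ) (θ : ℝ) :
    psiState N (diagonal fun i : Fin (N + 1) => (d i : ℂ)) 0 θ =
      ((∑ n ∈ Finset.range (N + 1), binomialWeight N θ n * d n : ℝ) : ℂ) := by
  rw [psiState, dotProduct, ← Fin.sum_univ_eq_sum_range (fun n => binomialWeight N θ n * d n),
    Complex.ofReal_sum]
  refine Finset.sum_congr rfl fun i _ => ?_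
  rw [mulVec_diagonal]
  have hchoose : (√(N.choose i : ℝ) : ℂ) ^ 2 = N.choose i := by
    rw [← Complex.ofReal_pow, Real.sq_sqrt (Nat.cast_nonneg _), Complex.ofReal_natCast]
  simp only [blochVec, Pi.star_apply, Complex.ofReal_zero, mul_zero, Complex.exp_zero, mul_one,
    star_mul', star_pow, Complex.star_def, Complex.conj_ofReal, binomialWeight,
    Complex.ofReal_mul, Complex.ofReal_pow, Complex.ofReal_natCast]
  linear_combination (d i : ℂ) * Real.sin (θ / 2) ^ (2 * (i : ℕ)) *
    Real.cos (θ / 2) ^ (2 * (N - (i : ℕ))) * hchoose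

lemma psiState_diagonal_sub (N : ℕ) (d : ℕ → ℝ) (θ : ℝ) :
    psiState N (diagonal fun i : Fin (N + 1) => (d i : ℂ)) 0 θ -
        psiState N (diagonal fun i : Fin (N + 1) => (d i : ℂ)) 0 0 =
      ((∑ n ∈ Finset.range (N + 1), binomialWeight N θ n * (d n - d 0) : ℝ) : ℂ) := by
  have hzero : ∑ n ∈ Finset.range (N + 1), binomialWeight N 0 n * d n = d 0 := by
    rw [Finset.sum_eq_single_of_mem 0 (by simp) fun n _ hn => by simp [binomialWeight, hn]]
    simp [binomialWeight]
  simp only [psiState_diagonal, hzero, mul_sub, Finset.sum_sub_distrib, ← Finset.sum_mul,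
    sum_binomialWeight, one_mul, Complex.ofReal_sub]

def extremalProfile (N n : ℕ) : ℝ := ∑ k ∈ Finset.Icc 1 n, 1 / raisingCoeff N k

lemma extremalProfile_zero (N : ℕ) : extremalProfile N 0 = 0 := by
  simp [extremalProfile]

lemma extremalProfile_nonneg (N n : ℕ) : 0 ≤ extremalProfile N n :=
  Finset.sum_nonneg fun k _ => one_div_nonneg.mpr (raisingCoeff_nonneg N k)

lemma extremalProfile_succ (N k : ℕ) :
    extremalProfile N (k + 1) = extremalProfile N k + 1 / raisingCoeff N (k + 1) :=
  Finset.sum_Icc_succ_top (by omega) _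

lemma raisingCoeff_mul_abs_extremalProfile_succ_sub {N k : ℕ} (hk : k < N) :
    raisingCoeff N (k + 1) * |extremalProfile N (k + 1) - extremalProfile N k| = 1 := by
  have hpos := raisingCoeff_pos (Nat.succ_pos k) hk
  rw [extremalProfile_succ, add_sub_cancel_left, abs_of_pos (one_div_pos.mpr hpos),
    mul_one_div_cancel hpos.ne']

lemma abs_sub_le_extremalProfile {N : ℕ} {d : ℕ → ℝ}
    (hd : ∀ k < N, raisingCoeff N (k + 1) * |d (k + 1) - d k| ≤ 1) {n : ℕ} (hn : n ≤ N) :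
    |d n - d 0| ≤ extremalProfile N n := by
  induction n with
  | zero => simp [extremalProfile_zero]
  | succ k ih =>
    have hpos := raisingCoeff_pos (Nat.succ_pos k) hn
    have hstep : |d (k + 1) - d k| ≤ 1 / raisingCoeff N (k + 1) := by
      rw [le_div_iff₀ hpos, mul_comm]
      exact hd k hn
    calc |d (k + 1) - d 0| ≤ |d (k + 1) - d k| + |d k - d 0| := abs_sub_le _ _ _
      _ ≤ 1 / raisingCoeff N (k + 1) + extremalProfile N k := add_le_add hstep (ih (by omega))
      _ = extremalProfile N (k + 1) := by rw [extremalProfile_succ, add_comm]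

lemma abs_sum_binomialWeight_mul_sub_le {N : ℕ} (θ : ℝ) {d : ℕ → ℝ}
    (hd : ∀ k < N, raisingCoeff N (k + 1) * |d (k + 1) - d k| ≤ 1) :
    |∑ n ∈ Finset.range (N + 1), binomialWeight N θ n * (d n - d 0)| ≤
      ∑ n ∈ Finset.range (N + 1), binomialWeight N θ n * extremalProfile N n := by
  refine (Finset.abs_sum_le_sum_abs _ _).trans (Finset.sum_le_sum fun n hn => ?_)
  rw [abs_mul, abs_of_nonneg (binomialWeight_nonneg N θ n)]
  exact mul_le_mul_of_nonneg_left
    (abs_sub_le_extremalProfile hd (Nat.lt_succ_iff.mp (Finset.mem_range.mp hn)))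
    (binomialWeight_nonneg N θ n)

lemma exists_diagonal_ofReal {N : ℕ} {a : Matrix (Fin (N + 1)) (Fin (N + 1)) ℂ}
    (ha : a.IsHermitian) (hdiag : a.IsDiag) :
    ∃ d : ℕ → ℝ, a = diagonal fun i : Fin (N + 1) => (d i : ℂ) :=
  ⟨fun k => (a (Fin.ofNat (N + 1) k) (Fin.ofNat (N + 1) k)).re, by
    rw [← hdiag.diagonal_diag, ← ha.coe_re_diag]
    simp⟩

theorem rhoAux_formula_general (N : ℕ) (θ : ℝ) :
    rhoAux N θ =
      ∑ n ∈ Finset.Icc 1 N, (N.choose n : ℝ) *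
        Real.sin (θ / 2) ^ (2 * n) * Real.cos (θ / 2) ^ (2 * (N - n)) *
        ∑ k ∈ Finset.Icc 1 n, 1 / Real.sqrt (k * (N + 1 - k)) := by
  have hsum : ∑ n ∈ Finset.range (N + 1), binomialWeight N θ n * extremalProfile N n =
      ∑ n ∈ Finset.Icc 1 N, binomialWeight N θ n * extremalProfile N n := by
    rw [Finset.range_eq_Ico, Finset.sum_eq_sum_Ico_succ_bot (by omega : 0 < N + 1),
      extremalProfile_zero, mul_zero, zero_add, Finset.Ico_add_one_right_eq_Icc]
  change rhoAux N θ = ∑ n ∈ Finset.Icc 1 N, binomialWeight N θ n * extremalProfile N n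
  rw [← hsum, rhoAux]
  refine IsGreatest.csSup_eq ⟨?_, ?_⟩
  · refine ⟨diagonal fun i : Fin (N + 1) => (extremalProfile N i : ℂ),
      isHermitian_diagonal_iff.mpr fun i => Complex.conj_ofReal _, isDiag_diagonal _,
      (opNorm_diracCommutator_le_one_iff N _).mpr fun k hk =>
        (raisingCoeff_mul_abs_extremalProfile_succ_sub hk).le, ?_⟩
    rw [psiState_diagonal_sub, extremalProfile_zero, Complex.norm_real, Real.norm_eq_abs]
    simp_rw [sub_zero]
    exact (abs_of_nonneg (Finset.sum_nonneg fun n _ =>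
      mul_nonneg (binomialWeight_nonneg N θ n) (extremalProfile_nonneg N n))).symm
  · rintro r ⟨a, ha, hdiag, hnorm, rfl⟩
    obtain ⟨d, rfl⟩ := exists_diagonal_ofReal ha hdiag
    rw [psiState_diagonal_sub, Complex.norm_real, Real.norm_eq_abs]
    exact abs_sum_binomialWeight_mul_sub_le θ ((opNorm_diracCommutator_le_one_iff N d).mp hnorm)

theorem rhoAux_formula (N : ℕ) (hN : 1 ≤ N) (θ : ℝ) (hθ : θ ∈ Set.Icc 0 Real.pi) :
    rhoAux N θ =
      ∑ n ∈ Finset.Icc 1 N, (N.choose n : ℝ) *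
        Real.sin (θ / 2) ^ (2 * n) * Real.cos (θ / 2) ^ (2 * (N - n)) *
        ∑ k ∈ Finset.Icc 1 n, 1 / Real.sqrt (k * (N + 1 - k)) :=
  rhoAux_formula_general N θ
end
end

section
/- Let N ≥ 1, j = N/2, and let U_j⁺ : ℂ^(N+2) → ℂ^(N+1) ⊗ ℂ² be the isometry U_j⁺ |m + ½⟩' := √((j+m+1)/(2j+1)) |m⟩ ⊗ e₁ + √((j−m)/(2j+1)) |m+1⟩ ⊗ e₂ (m = −j−1, …, j; vanishing-coefficient terms omitted). Define η_N⁺ : M_(N+1)(ℂ) → M_(N+2)(ℂ) by η_N⁺(a) := (U_j⁺)* (a ⊗ 1₂) U_j⁺. Then for every a ∈ M_(N+1)(ℂ) and every (φ, θ): (i) ψ^{N+1}_(φ,θ)(η_N⁺(a)) = ψ^N_(φ,θ)(a); and (ii) ‖[D_{N+1}, η_N⁺(a) ⊗ 1₂]‖ ≤ ‖[D_N, a ⊗ 1₂]‖. -/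
noncomputable section
open Matrix

/-- The isometry `U_j⁺ : ℂ^(N+2) → ℂ^(N+1) ⊗ ℂ²` (`j = N/2`), defined on the basis by
`U_j⁺ |m+½⟩' = √((j+m+1)/(2j+1)) |m⟩⊗e₁ + √((j−m)/(2j+1)) |m+1⟩⊗e₂`, written as a matrix;
the column index `k = m + j + 1 ∈ {0, …, N+1}`, the `inl` row index is the `⊗e₁` component
and the `inr` row index the `⊗e₂` component. -/
def Uplus (N : ℕ) : Matrix (Fin (N + 1) ⊕ Fin (N + 1)) (Fin (N + 2)) ℂ := fun r k =>
  Sum.elim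
    (fun i : Fin (N + 1) =>
      if (i : ℕ) + 1 = (k : ℕ) then (Real.sqrt ((k : ℝ) / (N + 1)) : ℂ) else 0)
    (fun i : Fin (N + 1) =>
      if (i : ℕ) = (k : ℕ) then (Real.sqrt (((N : ℝ) + 1 - (k : ℕ)) / (N + 1)) : ℂ) else 0) r

/-- The map `η_N⁺ : M_(N+1)(ℂ) → M_(N+2)(ℂ)`, `η_N⁺(a) = (U_j⁺)* (a ⊗ 1₂) U_j⁺`. -/
def etaPlus (N : ℕ) (a : Matrix (Fin (N + 1)) (Fin (N + 1)) ℂ) :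
    Matrix (Fin (N + 2)) (Fin (N + 2)) ℂ :=
  (Uplus N)ᴴ * tensorOne N a * Uplus N


/-!
`U⁺` is the equivariant embedding of spin `j + ½` into spin `j` ⊗ spin `½`: it intertwines
`H, E, F` on `ℂ^(N+2)` with the total angular momentum operators on `ℂ^(N+1) ⊗ ℂ²`.
Hence `U⁺ ⊗ 1₂` intertwines `D_(N+1)` with `D_N ⊗ 1₂ + K`, where `K` couples the new `ℂ²` factor
to the spinor factor and commutes with `a ⊗ 1₂ ⊗ 1₂`. Compressing by the isometry `U⁺ ⊗ 1₂`
turns `[D_N ⊗ 1₂ + K, a ⊗ 1₂ ⊗ 1₂] = [D_N, a ⊗ 1₂] ⊗ 1₂` into `[D_(N+1), η_N⁺(a) ⊗ 1₂]`, which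
does not increase the norm.

For the states, `U⁺ |φ,θ⟩_(N+1) = e^(-iφ/2) sin(θ/2) |φ,θ⟩_N ⊗ e₁ + e^(iφ/2) cos(θ/2) |φ,θ⟩_N ⊗ e₂`,
and the squared moduli of the two coefficients add up to `1`.
-/

open scoped Matrix.Norms.L2Operator
open Complex

lemma Fin.sum_ite_val_eq {M : Type*} [AddCommMonoid M] {n : ℕ} (f : Fin n → M) (m : ℕ) :
    (∑ q : Fin n, if (q : ℕ) = m then f q else 0) = if h : m < n then f ⟨m, h⟩ else 0 := by
  split_ifs with h
  · rw [Fintype.sum_eq_single ⟨m, h⟩ fun q hq => if_neg fun hqm => hq (Fin.ext hqm)]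
    simp
  · exact Finset.sum_eq_zero fun q _ => if_neg fun hq => h (by have := q.isLt; omega)

lemma Fin.sum_ite_eq_val {M : Type*} [AddCommMonoid M] {n : ℕ} (f : Fin n → M) (m : ℕ) :
    (∑ q : Fin n, if m = (q : ℕ) then f q else 0) = if h : m < n then f ⟨m, h⟩ else 0 := by
  simp_rw [@eq_comm ℕ m, Fin.sum_ite_val_eq]

lemma Fin.sum_ite_val_add_one_eq {M : Type*} [AddCommMonoid M] {n : ℕ} (f : Fin n → M)
    (m : ℕ) : (∑ q : Fin n, if (q : ℕ) + 1 = m then f q else 0) =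
      if h : 1 ≤ m ∧ m - 1 < n then f ⟨m - 1, h.2⟩ else 0 := by
  simp only [show ∀ q : Fin n, ((q : ℕ) + 1 = m ↔ (q : ℕ) = m - 1 ∧ 1 ≤ m) from
    fun q => by omega, ite_and, Fin.sum_ite_val_eq]
  split_ifs <;> first | rfl | omega

lemma Fin.sum_ite_eq_val_add_one {M : Type*} [AddCommMonoid M] {n : ℕ} (f : Fin n → M)
    (m : ℕ) : (∑ q : Fin n, if m = (q : ℕ) + 1 then f q else 0) =
      if h : 1 ≤ m ∧ m - 1 < n then f ⟨m - 1, h.2⟩ else 0 := by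
  simp_rw [@eq_comm ℕ m, Fin.sum_ite_val_add_one_eq]

lemma Real.sqrt_mul_sqrt_eq_mul_sqrt {x y c z : ℝ} (hx : 0 ≤ x) (hc : 0 ≤ c)
    (h : x * y = c ^ 2 * z) : √x * √y = c * √z := by
  rw [← Real.sqrt_mul hx, h, Real.sqrt_mul (sq_nonneg c), Real.sqrt_sq hc]

lemma Real.sqrt_div_mul_sqrt_choose_succ (n k : ℕ) :
    √(((k : ℝ) + 1) / (n + 1)) * √((n + 1).choose (k + 1) : ℝ) = √(n.choose k : ℝ) := by
  rw [← Real.sqrt_mul (by positivity)]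
  congr 1
  have h : ((n : ℝ) + 1) * n.choose k = (n + 1).choose (k + 1) * ((k : ℝ) + 1) := by
    exact_mod_cast Nat.add_one_mul_choose_eq n k
  field_simp
  linarith

lemma Real.sqrt_div_mul_sqrt_choose {n k : ℕ} (hk : k ≤ n + 1) :
    √(((n : ℝ) + 1 - k) / (n + 1)) * √((n + 1).choose k : ℝ) = √(n.choose k : ℝ) := by
  have hk' : (k : ℝ) ≤ n + 1 := by exact_mod_cast hk
  rw [← Real.sqrt_mul (div_nonneg (by linarith) (by positivity))]
  congr 1
  have h : (n.choose k : ℝ) * (n + 1) = (n + 1).choose k * ((n : ℝ) + 1 - k) := by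
    exact_mod_cast Nat.choose_mul_succ_eq n k
  field_simp
  linarith

lemma Complex.star_mul_self_exp_mul_I_mul_ofReal (x s : ℝ) :
    star (cexp (x * I) * s) * (cexp (x * I) * s) = (s : ℂ) ^ 2 := by
  rw [RCLike.star_def, Complex.conj_mul', norm_mul, Complex.norm_exp_ofReal_mul_I, one_mul,
    Complex.norm_real, Real.norm_eq_abs]
  norm_cast
  exact sq_abs s

namespace Matrix

variable {m n : Type*} [Fintype m] [Fintype n] [DecidableEq n]

def fromBlocksDiagStarHom : Matrix n n ℂ →⋆ₙₐ[ℂ] Matrix (n ⊕ n) (n ⊕ n) ℂ where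
  toFun M := fromBlocks M 0 0 M
  map_smul' c M := by simp [fromBlocks_smul]
  map_zero' := fromBlocks_zero
  map_add' M M' := by simp [fromBlocks_add]
  map_mul' M M' := by simp [fromBlocks_multiply]
  map_star' M := by simp [star_eq_conjTranspose, fromBlocks_conjTranspose]

lemma fromBlocksDiagStarHom_apply (M : Matrix n n ℂ) :
    fromBlocksDiagStarHom M = fromBlocks M 0 0 M := rfl

lemma norm_fromBlocks_diag_le (M : Matrix n n ℂ) : ‖fromBlocks M 0 0 M‖ ≤ ‖M‖ :=
  NonUnitalStarAlgHom.norm_apply_le fromBlocksDiagStarHom M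

lemma norm_le_one_of_conjTranspose_mul_self_eq_one {W : Matrix m n ℂ} (hW : Wᴴ * W = 1) :
    ‖W‖ ≤ 1 := by
  have h₁ : ‖(1 : Matrix n n ℂ)‖ ≤ 1 := by
    rw [cstar_norm_def, map_one]
    exact ContinuousLinearMap.norm_id_le
  have := l2_opNorm_conjTranspose_mul_self W
  rw [hW] at this
  nlinarith [norm_nonneg W]

variable [DecidableEq m]

lemma norm_conjTranspose_mul_mul_le {W : Matrix m n ℂ} (hW : Wᴴ * W = 1) (M : Matrix m m ℂ) :
    ‖Wᴴ * M * W‖ ≤ ‖M‖ := by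
  have hW₁ := norm_le_one_of_conjTranspose_mul_self_eq_one hW
  calc ‖Wᴴ * M * W‖ ≤ ‖Wᴴ‖ * ‖M‖ * ‖W‖ :=
        (l2_opNorm_mul _ _).trans (by gcongr; exact l2_opNorm_mul _ _)
    _ ≤ 1 * ‖M‖ * 1 := by rw [l2_opNorm_conjTranspose]; gcongr
    _ = ‖M‖ := by ring

lemma norm_commutator_conjTranspose_mul_mul_le {D : Matrix n n ℂ} {D' : Matrix m m ℂ}
    {W : Matrix m n ℂ} (hW : Wᴴ * W = 1) (hD : D.IsHermitian) (hD' : D'.IsHermitian)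
    (hDW : D' * W = W * D) (T : Matrix m m ℂ) :
    ‖D * (Wᴴ * T * W) - Wᴴ * T * W * D‖ ≤ ‖D' * T - T * D'‖ := by
  have hWD : Wᴴ * D' = D * Wᴴ := by
    simpa only [conjTranspose_mul, hD.eq, hD'.eq] using congrArg conjTranspose hDW
  have hcomm : D * (Wᴴ * T * W) - Wᴴ * T * W * D = Wᴴ * (D' * T - T * D') * W := by
    simp only [Matrix.mul_sub, Matrix.sub_mul, ← Matrix.mul_assoc, ← hWD]
    simp only [Matrix.mul_assoc, hDW]
  rw [hcomm]
  exact norm_conjTranspose_mul_mul_le hW _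

end Matrix

lemma opNorm_eq_norm {n : Type*} [Fintype n] [DecidableEq n] (M : Matrix n n ℂ) :
    opNorm M = ‖M‖ :=
  (cstar_norm_def M).symm

section Uplus

variable (N : ℕ)

def Uplus₁ : Matrix (Fin (N + 1)) (Fin (N + 2)) ℂ := (Uplus N).toRows₁

def Uplus₂ : Matrix (Fin (N + 1)) (Fin (N + 2)) ℂ := (Uplus N).toRows₂

lemma fromRows_Uplus₁_Uplus₂ : fromRows (Uplus₁ N) (Uplus₂ N) = Uplus N := fromRows_toRows _

variable {N}

lemma Uplus₁_apply (i : Fin (N + 1)) (k : Fin (N + 2)) :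
    Uplus₁ N i k = if (i : ℕ) + 1 = k then (√((k : ℝ) / (N + 1)) : ℂ) else 0 := rfl

lemma Uplus₂_apply (i : Fin (N + 1)) (k : Fin (N + 2)) :
    Uplus₂ N i k = if (i : ℕ) = k then (√(((N : ℝ) + 1 - (k : ℕ)) / (N + 1)) : ℂ) else 0 := rfl

lemma Fmat_apply_s15 (p q : Fin (N + 1)) :
    Fmat N p q = if (q : ℕ) = p + 1 then (√((N - (p : ℕ)) * ((p : ℕ) + 1)) : ℂ) else 0 := by
  rw [Fmat, conjTranspose_apply, Emat]
  split_ifs <;> simp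

variable (N)

lemma conjTranspose_Uplus_mul_self : (Uplus N)ᴴ * Uplus N = 1 := by
  rw [← fromRows_Uplus₁_Uplus₂, conjTranspose_fromRows_eq_fromCols_conjTranspose,
    fromCols_mul_fromRows]
  ext k l
  simp only [Matrix.add_apply, mul_apply, conjTranspose_apply, Uplus₁_apply, Uplus₂_apply,
    apply_ite (star : ℂ → ℂ), star_zero, RCLike.star_def, Complex.conj_ofReal, ite_mul, mul_ite,
    zero_mul, mul_zero, one_apply, Fin.sum_ite_val_eq, Fin.sum_ite_val_add_one_eq]
  split_ifs <;> try first | rfl | omega | simp; done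
  all_goals
    obtain rfl : k = l := ‹_›
    have hkN : ((k : ℕ) : ℝ) ≤ N + 1 := by exact_mod_cast Nat.lt_succ_iff.mp k.isLt
    simp only [← Complex.ofReal_mul, ← Complex.ofReal_add, ← Complex.ofReal_one,
      Complex.ofReal_inj, add_zero, zero_add,
      Real.mul_self_sqrt (by positivity : (0 : ℝ) ≤ (k : ℕ) / (N + 1)),
      Real.mul_self_sqrt (div_nonneg (sub_nonneg.2 hkN) (by positivity) :
        (0 : ℝ) ≤ (N + 1 - (k : ℕ)) / (N + 1))]
  · field_simp
    ring
  · rw [show ((k : ℕ) : ℝ) = N + 1 by exact_mod_cast (by omega : (k : ℕ) = N + 1),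
      div_self (by positivity)]
  · rw [show ((k : ℕ) : ℝ) = 0 by exact_mod_cast (by omega : (k : ℕ) = 0), sub_zero,
      div_self (by positivity)]

lemma Hmat_mul_Uplus₁_add_half_smul :
    Hmat N * Uplus₁ N + (1 / 2 : ℂ) • Uplus₁ N = Uplus₁ N * Hmat (N + 1) := by
  ext i k
  simp only [Hmat, diagonal_mul, mul_diagonal, Matrix.add_apply, Matrix.smul_apply, Uplus₁_apply,
    smul_eq_mul]
  split_ifs with h
  · rw [← h]
    push_cast
    ring
  · simp

lemma Hmat_mul_Uplus₂_sub_half_smul :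
    Hmat N * Uplus₂ N - (1 / 2 : ℂ) • Uplus₂ N = Uplus₂ N * Hmat (N + 1) := by
  ext i k
  simp only [Hmat, diagonal_mul, mul_diagonal, Matrix.sub_apply, Matrix.smul_apply, Uplus₂_apply,
    smul_eq_mul]
  split_ifs with h
  · rw [← h]
    push_cast
    ring
  · simp

lemma Emat_mul_Uplus₁_add_Uplus₂ : Emat N * Uplus₁ N + Uplus₂ N = Uplus₁ N * Emat (N + 1) := by
  ext i k
  simp only [Matrix.add_apply, mul_apply, Emat, Uplus₁_apply, Uplus₂_apply, ite_mul, mul_ite,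
    zero_mul, mul_zero, Fin.sum_ite_val_eq, Fin.sum_ite_val_add_one_eq]
  split_ifs with hk₁ <;> try first | rfl | omega | simp; done
  all_goals
    have hkN : ((k : ℕ) : ℝ) ≤ N + 1 := by exact_mod_cast Nat.lt_succ_iff.mp k.isLt
    have hRHS : √(((k : ℕ) + 1) / (N + 1)) * √((N + 1 - (k : ℕ)) * ((k : ℕ) + 1)) =
        ((k : ℕ) + 1) * √((N + 1 - (k : ℕ)) / (N + 1)) :=
      Real.sqrt_mul_sqrt_eq_mul_sqrt (by positivity) (by positivity) (by field_simp)
  · push_cast [Nat.cast_sub hk₁.1]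
    simp only [← Complex.ofReal_mul, ← Complex.ofReal_add, Complex.ofReal_inj, hRHS]
    rw [Real.sqrt_mul_sqrt_eq_mul_sqrt (c := (k : ℕ)) (z := (N + 1 - (k : ℕ)) / (N + 1))
      (by nlinarith) (by positivity) (by field_simp; ring)]
    ring
  · have hk₀ : (k : ℕ) = 0 := by omega
    push_cast
    rw [zero_add, ← Complex.ofReal_mul, hRHS, hk₀]
    simp

lemma Emat_mul_Uplus₂ : Emat N * Uplus₂ N = Uplus₂ N * Emat (N + 1) := by
  ext i k
  simp only [mul_apply, Emat, Uplus₂_apply, ite_mul, mul_ite, zero_mul, mul_zero,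
    Fin.sum_ite_val_eq]
  split_ifs with hk <;> try first | rfl | omega
  have hkN : ((k : ℕ) : ℝ) ≤ N := by exact_mod_cast Nat.lt_succ_iff.mp hk
  push_cast
  simp only [← Complex.ofReal_mul, Complex.ofReal_inj]
  rw [← Real.sqrt_mul (by nlinarith), ← Real.sqrt_mul (by apply div_nonneg <;> linarith)]
  congr 1
  field_simp
  ring

lemma Fmat_mul_Uplus₁ : Fmat N * Uplus₁ N = Uplus₁ N * Fmat (N + 1) := by
  ext i k
  simp only [mul_apply, Fmat_apply_s15, Uplus₁_apply, ite_mul, mul_ite, zero_mul, mul_zero,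
    Fin.sum_ite_val_add_one_eq, Fin.sum_ite_eq_val_add_one]
  split_ifs <;> try first | rfl | omega
  have hk : ((k : ℕ) : ℝ) = (i : ℕ) + 2 := by exact_mod_cast (by omega : (k : ℕ) = i + 2)
  have hiN : ((i : ℕ) : ℝ) ≤ N := by exact_mod_cast (by omega : (i : ℕ) ≤ N)
  rw [show (k : ℕ) - 1 = i + 1 by omega]
  push_cast
  simp only [← Complex.ofReal_mul, Complex.ofReal_inj, hk]
  rw [← Real.sqrt_mul (by nlinarith), ← Real.sqrt_mul (by positivity)]
  congr 1
  field_simp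
  ring

lemma Fmat_mul_Uplus₂_add_Uplus₁ : Fmat N * Uplus₂ N + Uplus₁ N = Uplus₂ N * Fmat (N + 1) := by
  ext i k
  simp only [Matrix.add_apply, mul_apply, Fmat_apply_s15, Uplus₁_apply, Uplus₂_apply, ite_mul,
    mul_ite, zero_mul, mul_zero, Fin.sum_ite_val_eq, Fin.sum_ite_eq_val_add_one]
  split_ifs <;> try first | rfl | omega | simp; done
  all_goals
    have hk : (k : ℕ) = i + 1 := by omega
    have hiN : ((i : ℕ) : ℝ) ≤ N := by exact_mod_cast Nat.lt_succ_iff.mp i.isLt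
    simp only [hk, Nat.add_sub_cancel]
    push_cast
    have hRHS : √((N + 1 - (i : ℕ)) / (N + 1)) * √((N + 1 - (i : ℕ)) * ((i : ℕ) + 1)) =
        (N + 1 - (i : ℕ)) * √(((i : ℕ) + 1) / (N + 1)) :=
      Real.sqrt_mul_sqrt_eq_mul_sqrt (by apply div_nonneg <;> linarith) (by linarith)
        (by field_simp)
    simp only [← Complex.ofReal_mul, ← Complex.ofReal_add, Complex.ofReal_inj, hRHS]
  · rw [Real.sqrt_mul_sqrt_eq_mul_sqrt (c := N - (i : ℕ)) (z := ((i : ℕ) + 1) / (N + 1))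
      (by nlinarith) (by linarith) (by field_simp; ring)]
    ring
  · have hi : (i : ℕ) = N := by omega
    rw [hi, add_sub_cancel_left, one_mul, zero_add]

end Uplus

section Coupled

variable (N : ℕ)

/-- The coupling `2 S ⊗ S'` between the spinor factor and the `ℂ²` factor of the range of `U⁺`,
in the block form of `coupledDirac`. -/
def spinCoupling :
    Matrix ((Fin (N + 1) ⊕ Fin (N + 1)) ⊕ (Fin (N + 1) ⊕ Fin (N + 1)))
      ((Fin (N + 1) ⊕ Fin (N + 1)) ⊕ (Fin (N + 1) ⊕ Fin (N + 1))) ℂ :=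
  fromBlocks ((1 / 2 : ℂ) • fromBlocks 1 0 0 (-1)) (fromBlocks 0 0 1 0) (fromBlocks 0 1 0 0)
    (-(1 / 2 : ℂ) • fromBlocks 1 0 0 (-1))

/-- `D_N ⊗ 1₂ + 2 S ⊗ S'` on `ℂ^(N+1) ⊗ ℂ² ⊗ ℂ²`: the outer blocks are indexed by the `e₁`/`e₂`
component of the range of `U⁺`, the inner ones follow the spinor layout of `DiracOp N`. -/
def coupledDirac :
    Matrix ((Fin (N + 1) ⊕ Fin (N + 1)) ⊕ (Fin (N + 1) ⊕ Fin (N + 1)))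
      ((Fin (N + 1) ⊕ Fin (N + 1)) ⊕ (Fin (N + 1) ⊕ Fin (N + 1))) ℂ :=
  fromBlocks (DiracOp N) 0 0 (DiracOp N) + spinCoupling N

/-- `U⁺ ⊗ 1₂`, with rows laid out as in `coupledDirac`. -/
def UplusTensorOne : Matrix ((Fin (N + 1) ⊕ Fin (N + 1)) ⊕ (Fin (N + 1) ⊕ Fin (N + 1)))
    (Fin (N + 2) ⊕ Fin (N + 2)) ℂ :=
  fromRows (fromBlocks (Uplus₁ N) 0 0 (Uplus₁ N)) (fromBlocks (Uplus₂ N) 0 0 (Uplus₂ N))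

lemma conjTranspose_UplusTensorOne_mul_self : (UplusTensorOne N)ᴴ * UplusTensorOne N = 1 := by
  have h := conjTranspose_Uplus_mul_self N
  rw [← fromRows_Uplus₁_Uplus₂, conjTranspose_fromRows_eq_fromCols_conjTranspose,
    fromCols_mul_fromRows] at h
  simp only [UplusTensorOne, conjTranspose_fromRows_eq_fromCols_conjTranspose,
    fromCols_mul_fromRows, fromBlocks_conjTranspose, conjTranspose_zero, fromBlocks_multiply,
    fromBlocks_add, Matrix.mul_zero, Matrix.zero_mul, add_zero, zero_add, h, fromBlocks_one]

lemma conjTranspose_UplusTensorOne_mul_tensorOne_mul (a : Matrix (Fin (N + 1)) (Fin (N + 1)) ℂ) :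
    (UplusTensorOne N)ᴴ * fromBlocks (tensorOne N a) 0 0 (tensorOne N a) * UplusTensorOne N =
      tensorOne (N + 1) (etaPlus N a) := by
  simp only [UplusTensorOne, tensorOne, etaPlus, ← fromRows_Uplus₁_Uplus₂,
    conjTranspose_fromRows_eq_fromCols_conjTranspose, fromCols_mul_fromRows,
    fromBlocks_conjTranspose, conjTranspose_zero, fromBlocks_multiply, fromBlocks_add,
    Matrix.mul_zero, Matrix.zero_mul, add_zero, zero_add, fromCols_mul_fromBlocks]

lemma isHermitian_DiracOp : (DiracOp N).IsHermitian := by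
  have hH : (Hmat N).IsHermitian := by
    simp [Hmat, isHermitian_diagonal_iff, IsSelfAdjoint]
  simp [IsHermitian, DiracOp, fromBlocks_conjTranspose, Fmat, hH.eq]

lemma isHermitian_coupledDirac : (coupledDirac N).IsHermitian := by
  refine IsHermitian.add ?_ ?_
  · simp [IsHermitian, fromBlocks_conjTranspose, (isHermitian_DiracOp N).eq]
  · simp [IsHermitian, spinCoupling, fromBlocks_conjTranspose, conjTranspose_smul]

lemma coupledDirac_mul_UplusTensorOne :
    coupledDirac N * UplusTensorOne N = UplusTensorOne N * DiracOp (N + 1) := by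
  simp only [coupledDirac, spinCoupling, UplusTensorOne, DiracOp, fromBlocks_add,
    fromBlocks_mul_fromRows, fromRows_mul, fromBlocks_smul, fromBlocks_multiply, Matrix.mul_zero,
    Matrix.zero_mul, add_zero, zero_add, Matrix.one_mul, smul_zero]
  simp only [← Hmat_mul_Uplus₁_add_half_smul, ← Hmat_mul_Uplus₂_sub_half_smul,
    ← Emat_mul_Uplus₁_add_Uplus₂, ← Emat_mul_Uplus₂, ← Fmat_mul_Uplus₁,
    ← Fmat_mul_Uplus₂_add_Uplus₁, Matrix.add_mul, Matrix.sub_mul, Matrix.mul_add,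
    Matrix.mul_sub, Matrix.one_mul, Matrix.mul_one, Matrix.smul_mul, Matrix.neg_mul]
  congr 2 <;> module

lemma commute_spinCoupling_tensorOne (a : Matrix (Fin (N + 1)) (Fin (N + 1)) ℂ) :
    Commute (spinCoupling N) (fromBlocks (tensorOne N a) 0 0 (tensorOne N a)) := by
  simp [Commute, SemiconjBy, spinCoupling, tensorOne, fromBlocks_multiply]

lemma commutator_coupledDirac_tensorOne (a : Matrix (Fin (N + 1)) (Fin (N + 1)) ℂ) :
    coupledDirac N * fromBlocks (tensorOne N a) 0 0 (tensorOne N a) -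
        fromBlocks (tensorOne N a) 0 0 (tensorOne N a) * coupledDirac N =
      fromBlocks (DiracOp N * tensorOne N a - tensorOne N a * DiracOp N) 0 0
        (DiracOp N * tensorOne N a - tensorOne N a * DiracOp N) := by
  rw [coupledDirac, Matrix.add_mul, Matrix.mul_add, (commute_spinCoupling_tensorOne N a).eq,
    add_sub_add_right_eq_sub]
  simp only [← fromBlocksDiagStarHom_apply, map_mul, map_sub]

end Coupled

section Coherent

variable (N : ℕ) (φ θ : ℝ)

lemma Uplus₁_mulVec_blochVec :
    Uplus₁ N *ᵥ blochVec (N + 1) φ θ =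
      (cexp (↑(-φ / 2) * I) * ↑(Real.sin (θ / 2))) • blochVec N φ θ := by
  ext i
  have hi : (i : ℕ) + 1 < N + 2 := by omega
  simp only [mulVec, dotProduct, Uplus₁_apply, ite_mul, zero_mul, Fin.sum_ite_eq_val, dif_pos hi,
    blochVec, Pi.smul_apply, smul_eq_mul]
  have hexp : cexp (-I * (↑((i : ℕ) + 1) - ↑(N + 1) / 2) * φ) =
      cexp (↑(-φ / 2) * I) * cexp (-I * (((i : ℕ) : ℂ) - N / 2) * φ) := by
    rw [← Complex.exp_add]
    push_cast
    ring_nf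
  have hch : (√(↑((i : ℕ) + 1) / (N + 1)) : ℂ) * √((N + 1).choose ((i : ℕ) + 1) : ℝ) =
      √(N.choose i : ℝ) := by
    exact_mod_cast Real.sqrt_div_mul_sqrt_choose_succ N i
  rw [hexp, Nat.add_sub_add_right, pow_succ]
  linear_combination (cexp (↑(-φ / 2) * I) * cexp (-I * (((i : ℕ) : ℂ) - N / 2) * φ) *
    ↑(Real.sin (θ / 2)) ^ (i : ℕ) * ↑(Real.sin (θ / 2)) * ↑(Real.cos (θ / 2)) ^ (N - i)) * hch

lemma Uplus₂_mulVec_blochVec :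
    Uplus₂ N *ᵥ blochVec (N + 1) φ θ =
      (cexp (↑(φ / 2) * I) * ↑(Real.cos (θ / 2))) • blochVec N φ θ := by
  ext i
  have hi : (i : ℕ) < N + 2 := by omega
  simp only [mulVec, dotProduct, Uplus₂_apply, ite_mul, zero_mul, Fin.sum_ite_eq_val, dif_pos hi,
    blochVec, Pi.smul_apply, smul_eq_mul]
  have hexp : cexp (-I * (((i : ℕ) : ℂ) - ↑(N + 1) / 2) * φ) =
      cexp (↑(φ / 2) * I) * cexp (-I * (((i : ℕ) : ℂ) - N / 2) * φ) := by
    rw [← Complex.exp_add]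
    push_cast
    ring_nf
  have hch : (√((N + 1 - (i : ℕ)) / (N + 1)) : ℂ) * √((N + 1).choose i : ℝ) =
      √(N.choose i : ℝ) := by
    exact_mod_cast Real.sqrt_div_mul_sqrt_choose (by omega : (i : ℕ) ≤ N + 1)
  rw [hexp, show N + 1 - (i : ℕ) = N - i + 1 by omega, pow_succ]
  linear_combination (cexp (↑(φ / 2) * I) * cexp (-I * (((i : ℕ) : ℂ) - N / 2) * φ) *
    ↑(Real.sin (θ / 2)) ^ (i : ℕ) * ↑(Real.cos (θ / 2)) ^ (N - i) * ↑(Real.cos (θ / 2))) * hch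

lemma psiState_etaPlus (a : Matrix (Fin (N + 1)) (Fin (N + 1)) ℂ) :
    psiState (N + 1) (etaPlus N a) φ θ = psiState N a φ θ := by
  rw [psiState, etaPlus, ← mulVec_mulVec, ← mulVec_mulVec, dotProduct_mulVec, ← star_mulVec,
    ← fromRows_Uplus₁_Uplus₂, fromRows_mulVec, Uplus₁_mulVec_blochVec, Uplus₂_mulVec_blochVec,
    tensorOne, fromBlocks_mulVec]
  simp only [Sum.elim_comp_inl, Sum.elim_comp_inr, zero_mulVec, add_zero, zero_add,
    Function.star_sumElim, sumElim_dotProduct_sumElim, mulVec_smul, smul_zero, star_smul,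
    smul_dotProduct, dotProduct_smul, smul_eq_mul]
  have hsin := Complex.star_mul_self_exp_mul_I_mul_ofReal (-φ / 2) (Real.sin (θ / 2))
  have hcos := Complex.star_mul_self_exp_mul_I_mul_ofReal (φ / 2) (Real.cos (θ / 2))
  have hsq : (Real.sin (θ / 2) : ℂ) ^ 2 + (Real.cos (θ / 2) : ℂ) ^ 2 = 1 := by
    exact_mod_cast Real.sin_sq_add_cos_sq (θ / 2)
  rw [psiState]
  linear_combination (star (blochVec N φ θ) ⬝ᵥ a *ᵥ blochVec N φ θ) * (hsin + hcos + hsq)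

end Coherent

theorem etaPlus_compat_general (N : ℕ) (a : Matrix (Fin (N + 1)) (Fin (N + 1)) ℂ)
    (φ θ : ℝ) :
    psiState (N + 1) (etaPlus N a) φ θ = psiState N a φ θ ∧
    opNorm (DiracOp (N + 1) * tensorOne (N + 1) (etaPlus N a) -
        tensorOne (N + 1) (etaPlus N a) * DiracOp (N + 1)) ≤
      opNorm (DiracOp N * tensorOne N a - tensorOne N a * DiracOp N) := by
  refine ⟨psiState_etaPlus N φ θ a, ?_⟩
  rw [opNorm_eq_norm, opNorm_eq_norm, ← conjTranspose_UplusTensorOne_mul_tensorOne_mul]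
  calc _ ≤ ‖coupledDirac N * fromBlocks (tensorOne N a) 0 0 (tensorOne N a) -
          fromBlocks (tensorOne N a) 0 0 (tensorOne N a) * coupledDirac N‖ :=
        norm_commutator_conjTranspose_mul_mul_le (conjTranspose_UplusTensorOne_mul_self N)
          (isHermitian_DiracOp _) (isHermitian_coupledDirac N) (coupledDirac_mul_UplusTensorOne N) _
    _ ≤ _ := by
        rw [commutator_coupledDirac_tensorOne]
        exact norm_fromBlocks_diag_le _

theorem etaPlus_compat (N : ℕ) (hN : 1 ≤ N) (a : Matrix (Fin (N + 1)) (Fin (N + 1)) ℂ)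
    (φ θ : ℝ) :
    psiState (N + 1) (etaPlus N a) φ θ = psiState N a φ θ ∧
    opNorm (DiracOp (N + 1) * tensorOne (N + 1) (etaPlus N a) -
        tensorOne (N + 1) (etaPlus N a) * DiracOp (N + 1)) ≤
      opNorm (DiracOp N * tensorOne N a - tensorOne N a * DiracOp N) :=
  etaPlus_compat_general N a φ θ
end
end
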